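/- Let K be a field of characteristic zero and A_n(K) the Weyl algebra. Fix a partition of {1,…,n} into consecutive blocks N_1,…,N_p of sizes n_1,…,n_p. Let θ = x^α∂^β and θ' = x^γ∂^δ be monomials with θ | θ' (i.e., α_i ≤ γ_i and β_i ≤ δ_i for all i). Then, computing the product in A_n(K), there exist monomials θ_0, θ_1, …, θ_k such that θ' = θ_0·θ − Σ_{i=1}^{k} c_i θ_i (for some nonzero constants c_i ∈ K) where: ord_j θ_0 + ord_j θ = ord_j θ' for j = 1,…,p, and moreover |θ_0|_{xj} + |θ|_{xj} = |θ'|_{xj} and |θ_0|_{∂j} + |θ|_{∂j} = |θ'|_{∂j} for all j; while for each i = 1,…,k, ord θ_i < ord θ', ord_j θ_i ≤ ord_j θ' for all j = 1,…,p, and ord_{j_0} θ_i < ord_{j_0} θ' for at least one j_0 ∈ {1,…,p}. -/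

import Mathlib

set_option synthInstance.maxHeartbeats 400000
set_option maxHeartbeats 1000000

open MvPolynomial

noncomputable def weylGens (n : ℕ) (K : Type) [Field K] :
    Set (Module.End K (MvPolynomial (Fin n) K)) :=
  (Set.range fun i : Fin n =>
      (LinearMap.mulLeft K (X i : MvPolynomial (Fin n) K) : Module.End K (MvPolynomial (Fin n) K))) ∪
  (Set.range fun i : Fin n => ((pderiv i).toLinearMap : Module.End K (MvPolynomial (Fin n) K)))

noncomputable def WeylAlg (n : ℕ) (K : Type) [Field K] :
    Subalgebra K (Module.End K (MvPolynomial (Fin n) K)) :=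
  Algebra.adjoin K (weylGens n K)

noncomputable def wx (n : ℕ) (K : Type) [Field K] (i : Fin n) : WeylAlg n K :=
  ⟨LinearMap.mulLeft K (X i), Algebra.subset_adjoin (Set.mem_union_left _ ⟨i, rfl⟩)⟩

noncomputable def wd (n : ℕ) (K : Type) [Field K] (i : Fin n) : WeylAlg n K :=
  ⟨(pderiv i).toLinearMap, Algebra.subset_adjoin (Set.mem_union_right _ ⟨i, rfl⟩)⟩

noncomputable def wMono (n : ℕ) (K : Type) [Field K] (α β : Fin n → ℕ) : WeylAlg n K :=
  (((List.finRange n).map fun i => wx n K i ^ α i).prod) *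
  (((List.finRange n).map fun i => wd n K i ^ β i).prod)

def ordTot (n : ℕ) (α β : Fin n → ℕ) : ℕ := (∑ i, α i) + ∑ i, β i

noncomputable def bernW (n : ℕ) (K : Type) [Field K] (r : ℤ) : Submodule K (WeylAlg n K) :=
  Submodule.span K {D | ∃ α β : Fin n → ℕ, (ordTot n α β : ℤ) ≤ r ∧ D = wMono n K α β}

noncomputable def modFil (n : ℕ) (K : Type) [Field K] (M : Type) [AddCommGroup M]
    [Module K M] [Module (WeylAlg n K) M] (m : ℕ) (g : Fin m → M) (r : ℤ) :
    Submodule K M :=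
  Submodule.span K {x | ∃ i, ∃ D ∈ bernW n K r, x = D • g i}

/-- The `j`-th order of the monomial `x^α ∂^β` with respect to the partition `B`. -/
def ordBlk {n p : ℕ} (B : Fin n → Fin p) (α β : Fin n → ℕ) (j : Fin p) : ℕ :=
  ∑ i ∈ Finset.univ.filter (fun i => B i = j), (α i + β i)

/-- The sum of the entries of `v` over the `j`-th block of the partition `B`. -/
def blockSum {n p : ℕ} (B : Fin n → Fin p) (v : Fin n → ℕ) (j : Fin p) : ℕ :=
  ∑ i ∈ Finset.univ.filter (fun i => B i = j), v i

/-!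
Put `α₀ = γ - α`, `β₀ = δ - β` and `θ₀ = x^α₀ ∂^β₀`. Commuting `∂^β₀` past `x^α` one derivative
at a time, using `∂ᵢ x^α = x^α ∂ᵢ + αᵢ x^(α - eᵢ)`, shows that `θ₀ θ - θ'` lies in the `K`-span
of the monomials properly dividing `θ'`. Such a monomial has smaller total order and no larger
block orders, so some block order drops. The nonzero coefficients `cᵢ` are the values of a finitely
supported representation of an element of this span on its support.
-/

theorem List.prod_map_mul_of_commute {ι M : Type*} [Monoid M] (l : List ι) (f g : ι → M)
    (h : ∀ i j, Commute (f i) (g j)) :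
    (l.map fun i => f i * g i).prod = (l.map f).prod * (l.map g).prod := by
  induction l with
  | nil => simp
  | cons a l ih =>
    have hc : Commute (g a) (l.map f).prod := Commute.list_prod_right _ _ fun x hx => by
      obtain ⟨i, -, rfl⟩ := List.mem_map.mp hx
      exact (h i a).symm
    simp only [List.map_cons, List.prod_cons, ih, mul_assoc]
    rw [← mul_assoc (g a), hc.eq, mul_assoc]

theorem Pi.induction_add_single {ι : Type*} [Finite ι] [DecidableEq ι] {p : (ι → ℕ) → Prop}
    (f : ι → ℕ) (zero : p 0) (add_single : ∀ f i, p f → p (f + Pi.single i 1)) : p f := by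
  suffices ∀ g f, p f → p (f + g) by simpa using this f 0 zero
  intro g
  induction g using Pi.single_induction with
  | zero => simp
  | add g h hg hh => exact fun f hf => add_assoc f g h ▸ hh _ (hg f hf)
  | single i m =>
    induction m with
    | zero => simp
    | succ m ih =>
      intro f hf
      rw [Pi.single_add (f := fun _ => ℕ) i m 1, ← add_assoc]
      exact add_single _ i (ih f hf)

namespace WeylAlg

variable {n : ℕ} {K : Type} [Field K]

lemma coe_wx (i : Fin n) :
    (wx n K i : Module.End K (MvPolynomial (Fin n) K)) = Algebra.lmul K _ (X i) := rfl

lemma coe_wd (i : Fin n) :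
    (wd n K i : Module.End K (MvPolynomial (Fin n) K)) = (pderiv i).toLinearMap := rfl

lemma commute_wd_wd (i j : Fin n) : Commute (wd n K i) (wd n K j) := by
  have hbr : ⁅(pderiv i : Derivation K (MvPolynomial (Fin n) K) _), pderiv j⁆ = 0 :=
    derivation_ext fun k => by
      classical
      rw [Derivation.commutator_apply]
      simp [pderiv_X, Pi.single_apply, apply_ite (pderiv _)]
  refine Subtype.ext (LinearMap.ext fun f => ?_)
  simpa [coe_wd, Derivation.commutator_apply, sub_eq_zero] using congr($hbr f)

variable (K) in
noncomputable def xPow (α : Fin n → ℕ) : WeylAlg n K :=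
  ((List.finRange n).map fun i => wx n K i ^ α i).prod

variable (K) in
noncomputable def dPow (β : Fin n → ℕ) : WeylAlg n K :=
  ((List.finRange n).map fun i => wd n K i ^ β i).prod

lemma wMono_eq_xPow_mul_dPow (α β : Fin n → ℕ) : wMono n K α β = xPow K α * dPow K β := rfl

lemma xPow_zero : xPow K (0 : Fin n → ℕ) = 1 := by simp [xPow]

lemma dPow_zero : dPow K (0 : Fin n → ℕ) = 1 := by simp [dPow]

lemma monomial_eq_prod_X_pow (α : Fin n → ℕ) :
    monomial (Finsupp.equivFunOnFinite.symm α) (1 : K) = ∏ i, X i ^ α i := by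
  rw [monomial_eq, C_1, one_mul, Finsupp.prod_fintype _ _ fun _ => pow_zero _]
  rfl

lemma coe_xPow (α : Fin n → ℕ) :
    (xPow K α : Module.End K (MvPolynomial (Fin n) K)) =
      Algebra.lmul K _ (monomial (Finsupp.equivFunOnFinite.symm α) 1) := by
  rw [monomial_eq_prod_X_pow, Fin.prod_univ_def, map_list_prod, xPow,
    SubmonoidClass.coe_list_prod, List.map_map, List.map_map]
  congr 2
  funext i
  simp only [Function.comp_apply, SubmonoidClass.coe_pow, coe_wx, map_pow]

lemma xPow_add (α α' : Fin n → ℕ) : xPow K (α + α') = xPow K α * xPow K α' := by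
  have hadd : Finsupp.equivFunOnFinite.symm (α + α') =
      Finsupp.equivFunOnFinite.symm α + Finsupp.equivFunOnFinite.symm α' := by
    ext; simp
  refine Subtype.ext ?_
  rw [Subalgebra.coe_mul, coe_xPow, coe_xPow, coe_xPow, ← map_mul, monomial_mul, one_mul, hadd]

lemma dPow_add (β β' : Fin n → ℕ) : dPow K (β + β') = dPow K β * dPow K β' := by
  simp only [dPow, Pi.add_apply, pow_add]
  exact List.prod_map_mul_of_commute _ _ _ fun i j => ((commute_wd_wd i j).pow_pow _ _)

lemma dPow_single (i : Fin n) : dPow K (Pi.single i 1) = wd n K i := by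
  classical
  rw [dPow, List.prod_map_eq_pow_single i _ fun j hj _ => by simp [hj], List.count_finRange]
  simp

lemma wd_mul_xPow (i : Fin n) (α : Fin n → ℕ) :
    wd n K i * xPow K α = xPow K α * wd n K i + α i • xPow K (α - Pi.single i 1) := by
  have hsub : Finsupp.equivFunOnFinite.symm α - Finsupp.single i 1 =
      Finsupp.equivFunOnFinite.symm (α - Pi.single i 1) := by
    ext j; rcases eq_or_ne j i with rfl | h <;> simp [*]
  refine Subtype.ext (LinearMap.ext fun f => ?_)
  simp only [MulMemClass.coe_mul, coe_wd, coe_xPow, Algebra.coe_lmul_eq_mul, Module.End.mul_apply,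
    LinearMap.mul_apply_apply, Derivation.coeFn_coe, Derivation.leibniz, smul_eq_mul,
    pderiv_monomial, hsub, Finsupp.equivFunOnFinite_symm_apply_apply, one_mul, nsmul_eq_mul,
    AddMemClass.coe_add, SubringClass.coe_natCast, LinearMap.add_apply, Module.End.natCast_apply,
    add_right_inj]
  simp only [monomial_eq, map_natCast, C_1]
  ring

variable (K) in
/-- Under the coordinatewise order on exponent pairs, `m' < m` says that the monomial of `m'`
properly divides that of `m`. -/
noncomputable def spanBelow (m : (Fin n → ℕ) × (Fin n → ℕ)) : Submodule K (WeylAlg n K) :=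
  Submodule.span K (Function.uncurry (wMono n K) '' Set.Iio m)

lemma wMono_mem_spanBelow {α β : Fin n → ℕ} {m : (Fin n → ℕ) × (Fin n → ℕ)} (h : (α, β) < m) :
    wMono n K α β ∈ spanBelow K m :=
  Submodule.subset_span ⟨(α, β), h, rfl⟩

lemma spanBelow_mono {m m' : (Fin n → ℕ) × (Fin n → ℕ)} (h : m ≤ m') :
    spanBelow K m ≤ spanBelow K m' :=
  Submodule.span_mono (Set.image_mono (Set.Iio_subset_Iio h))

lemma xPow_mul_mul_dPow_mem_spanBelow {r : WeylAlg n K} {α β : Fin n → ℕ}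
    (hr : r ∈ spanBelow K (α, β)) (a b : Fin n → ℕ) :
    xPow K a * r * dPow K b ∈ spanBelow K (a + α, β + b) := by
  suffices spanBelow K (α, β) ≤
      (spanBelow K (a + α, β + b)).comap (LinearMap.mulLeftRight K (xPow K a, dPow K b)) from
    this hr
  rw [spanBelow, Submodule.span_le]
  rintro _ ⟨⟨c, d⟩, hcd, rfl⟩
  have hlt : (a + c, d + b) < (a + α, β + b) := by
    simpa using add_lt_add_right (add_lt_add_left hcd (a, 0)) (0, b)
  simpa [wMono_eq_xPow_mul_dPow, xPow_add, dPow_add, mul_assoc] using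
    wMono_mem_spanBelow (K := K) hlt

lemma exists_dPow_mul_xPow_eq_add (α β : Fin n → ℕ) :
    ∃ r ∈ spanBelow K (α, β), dPow K β * xPow K α = wMono n K α β + r := by
  classical
  induction β using Pi.induction_add_single generalizing α with
  | zero => exact ⟨0, zero_mem _, by simp [wMono_eq_xPow_mul_dPow, dPow_zero]⟩
  | add_single β j ih =>
    obtain ⟨r, hr, hαβ⟩ := ih α
    obtain ⟨r', hr', hα'β⟩ := ih (α - Pi.single j 1)
    have hlt : (α - Pi.single j 1, β) < (α, β + Pi.single j 1) :=
      Prod.mk_lt_mk_of_le_of_lt tsub_le_self (lt_add_of_pos_right β (Pi.single_pos.mpr one_pos))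
    refine ⟨r * dPow K (Pi.single j 1) +
        α j • (wMono n K (α - Pi.single j 1) β + r'), add_mem ?_ ?_, ?_⟩
    · simpa [xPow_zero] using xPow_mul_mul_dPow_mem_spanBelow hr 0 (Pi.single j 1)
    · exact Submodule.smul_of_tower_mem _ _
        (add_mem (wMono_mem_spanBelow hlt) (spanBelow_mono hlt.le hr'))
    · rw [dPow_add, dPow_single, mul_assoc, wd_mul_xPow, mul_add, ← mul_assoc, hαβ,
        mul_smul_comm, hα'β]
      simp only [wMono_eq_xPow_mul_dPow, dPow_add, dPow_single, add_mul,
        mul_assoc, add_assoc]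

lemma exists_wMono_mul_wMono_eq_add (α₀ β₀ α β : Fin n → ℕ) :
    ∃ r ∈ spanBelow K (α₀ + α, β₀ + β),
      wMono n K α₀ β₀ * wMono n K α β = wMono n K (α₀ + α) (β₀ + β) + r := by
  obtain ⟨r, hr, hβ₀α⟩ := exists_dPow_mul_xPow_eq_add (K := K) α β₀
  refine ⟨xPow K α₀ * r * dPow K β, xPow_mul_mul_dPow_mem_spanBelow hr α₀ β, ?_⟩
  calc wMono n K α₀ β₀ * wMono n K α β = xPow K α₀ * (dPow K β₀ * xPow K α) * dPow K β := by
        simp only [wMono_eq_xPow_mul_dPow, mul_assoc]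
    _ = _ := by
        rw [hβ₀α]
        simp only [wMono_eq_xPow_mul_dPow, xPow_add, dPow_add, mul_add, add_mul, mul_assoc]

end WeylAlg

theorem Submodule.exists_fin_sum_of_mem_span_image {R M ι : Type*} [Semiring R]
    [AddCommMonoid M] [Module R M] {f : ι → M} {s : Set ι} {x : M}
    (hx : x ∈ Submodule.span R (f '' s)) :
    ∃ (k : ℕ) (v : Fin k → ι) (c : Fin k → R),
      (∀ i, c i ≠ 0) ∧ (∀ i, v i ∈ s) ∧ x = ∑ i, c i • f (v i) := by
  obtain ⟨l, hl, rfl⟩ := (Finsupp.mem_span_image_iff_linearCombination R).mp hx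
  refine ⟨l.support.card, fun i => l.support.equivFin.symm i,
    fun i => l (l.support.equivFin.symm i), fun i => Finsupp.mem_support_iff.mp (Subtype.prop _),
    fun i => hl (Subtype.prop _), ?_⟩
  rw [Finsupp.linearCombination_apply, Finsupp.sum, ← Finset.sum_coe_sort,
    ← Equiv.sum_comp l.support.equivFin.symm]

section Blocks

variable {n p : ℕ} (B : Fin n → Fin p)

lemma ordBlk_add (α β α' β' : Fin n → ℕ) (j : Fin p) :
    ordBlk B (α + α') (β + β') j = ordBlk B α β j + ordBlk B α' β' j := by
  simp only [ordBlk, Pi.add_apply, add_add_add_comm, Finset.sum_add_distrib]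

lemma blockSum_add (u v : Fin n → ℕ) (j : Fin p) :
    blockSum B (u + v) j = blockSum B u j + blockSum B v j :=
  Finset.sum_add_distrib

lemma ordBlk_le_ordBlk {α β γ δ : Fin n → ℕ} (hα : α ≤ γ) (hβ : β ≤ δ) (j : Fin p) :
    ordBlk B α β j ≤ ordBlk B γ δ j :=
  Finset.sum_le_sum fun i _ => add_le_add (hα i) (hβ i)

lemma sum_ordBlk (α β : Fin n → ℕ) : ∑ j, ordBlk B α β j = ordTot n α β := by
  rw [ordTot, ← Finset.sum_add_distrib]
  exact Finset.sum_fiberwise Finset.univ B fun i => α i + β i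

lemma ordTot_lt_ordTot {α β γ δ : Fin n → ℕ} (h : (α, β) < (γ, δ)) :
    ordTot n α β < ordTot n γ δ := by
  rcases Prod.lt_iff.mp h with ⟨hα, hβ⟩ | ⟨hα, hβ⟩
  · exact add_lt_add_of_lt_of_le (Fintype.sum_strictMono hα) (Fintype.sum_mono hβ)
  · exact add_lt_add_of_le_of_lt (Fintype.sum_mono hα) (Fintype.sum_strictMono hβ)

lemma exists_ordBlk_lt_ordBlk {α β γ δ : Fin n → ℕ} (h : (α, β) < (γ, δ)) :
    ∃ j, ordBlk B α β j < ordBlk B γ δ j := by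
  obtain ⟨j, -, hj⟩ := Finset.exists_lt_of_sum_lt (s := Finset.univ)
    (f := ordBlk B α β) (g := ordBlk B γ δ) (by simpa only [sum_ordBlk] using ordTot_lt_ordTot h)
  exact ⟨j, hj⟩

end Blocks

theorem statement_11_general (n p : ℕ) (K : Type) [Field K]
    (B : Fin n → Fin p)
    (α β γ δ : Fin n → ℕ) (hα : α ≤ γ) (hβ : β ≤ δ) :
    ∃ (α₀ β₀ : Fin n → ℕ) (k : ℕ) (a b : Fin k → Fin n → ℕ) (c : Fin k → K),
      (∀ i, c i ≠ 0) ∧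
      wMono n K γ δ =
        wMono n K α₀ β₀ * wMono n K α β - ∑ i, c i • wMono n K (a i) (b i) ∧
      (∀ j, ordBlk B α₀ β₀ j + ordBlk B α β j = ordBlk B γ δ j) ∧
      (∀ j, blockSum B α₀ j + blockSum B α j = blockSum B γ j) ∧
      (∀ j, blockSum B β₀ j + blockSum B β j = blockSum B δ j) ∧
      ∀ i, ordTot n (a i) (b i) < ordTot n γ δ ∧
        (∀ j, ordBlk B (a i) (b i) j ≤ ordBlk B γ δ j) ∧
        ∃ j₀, ordBlk B (a i) (b i) j₀ < ordBlk B γ δ j₀ := by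
  obtain ⟨α₀, rfl⟩ : ∃ α₀, γ = α₀ + α := ⟨γ - α, (tsub_add_cancel_of_le hα).symm⟩
  obtain ⟨β₀, rfl⟩ : ∃ β₀, δ = β₀ + β := ⟨δ - β, (tsub_add_cancel_of_le hβ).symm⟩
  obtain ⟨r, hr, hprod⟩ := WeylAlg.exists_wMono_mul_wMono_eq_add (K := K) α₀ β₀ α β
  obtain ⟨k, m, c, hc, hm, rfl⟩ := Submodule.exists_fin_sum_of_mem_span_image hr
  have hlt : ∀ i, m i < (α₀ + α, β₀ + β) := hm
  -- The subtraction on `WeylAlg n K` matches the `AddGroup` one only at default transparency.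
  exact ⟨α₀, β₀, k, fun i => (m i).1, fun i => (m i).2, c, hc,
    eq_sub_of_add_eq (G := WeylAlg n K) hprod.symm,
    fun j => (ordBlk_add B _ _ _ _ j).symm, fun j => (blockSum_add B _ _ j).symm,
    fun j => (blockSum_add B _ _ j).symm,
    fun i => ⟨ordTot_lt_ordTot (hlt i), ordBlk_le_ordBlk B (hlt i).le.1 (hlt i).le.2,
      exists_ordBlk_lt_ordBlk B (hlt i)⟩⟩

theorem statement_11 (n p : ℕ) (hp : 1 ≤ p) (K : Type) [Field K] [CharZero K]
    (nn : Fin p → ℕ) (hn : ∑ j, nn j = n)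
    (B : Fin n → Fin p) (hBmono : Monotone B)
    (hBcard : ∀ j, (Finset.univ.filter fun i => B i = j).card = nn j)
    (α β γ δ : Fin n → ℕ) (hα : α ≤ γ) (hβ : β ≤ δ) :
    ∃ (α₀ β₀ : Fin n → ℕ) (k : ℕ) (a b : Fin k → Fin n → ℕ) (c : Fin k → K),
      (∀ i, c i ≠ 0) ∧
      wMono n K γ δ =
        wMono n K α₀ β₀ * wMono n K α β - ∑ i, c i • wMono n K (a i) (b i) ∧
      (∀ j, ordBlk B α₀ β₀ j + ordBlk B α β j = ordBlk B γ δ j) ∧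
      (∀ j, blockSum B α₀ j + blockSum B α j = blockSum B γ j) ∧
      (∀ j, blockSum B β₀ j + blockSum B β j = blockSum B δ j) ∧
      ∀ i, ordTot n (a i) (b i) < ordTot n γ δ ∧
        (∀ j, ordBlk B (a i) (b i) j ≤ ordBlk B γ δ j) ∧
        ∃ j₀, ordBlk B (a i) (b i) j₀ < ordBlk B γ δ j₀ :=
  statement_11_general n p K B α β γ δ hα hβ
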